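/- arXiv:1506.02945 — 3 statements merged into one kernel-verified Lean document; each statement's English description precedes it below -/
import Mathlib

section
/- Under the same hypotheses as the previous statement (a² ≤ b f, |ω| b ≤ λ₀ a + f, |ω| ≥ max{λ₀²,1}), one also has |ω|^{1/2} · a ≤ (2 + λ₀²/|ω|)^{1/2} · f. -/
/-!
Multiplying `a² ≤ b f` by `|ω|` and inserting `|ω| b ≤ λ₀ a + f` gives `|ω| a² ≤ λ₀ a f + f²`.
The cross term is absorbed by AM-GM, `2 (|ω| a)(λ₀ f) ≤ |ω|² a² + λ₀² f²`, which leaves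
`|ω| a² ≤ (2 + λ₀²/|ω|) f²`; taking square roots gives the estimate.
-/

theorem mul_sq_le_of_le_mul_add_sq {w c a f : ℝ} (hw : 0 < w)
    (h : w * a ^ 2 ≤ c * a * f + f ^ 2) : w * a ^ 2 ≤ (2 + c ^ 2 / w) * f ^ 2 := by
  have amgm := two_mul_le_add_sq (w * a) (c * f)
  have hsq : w ^ 2 * a ^ 2 ≤ (2 * w + c ^ 2) * f ^ 2 := by nlinarith
  calc w * a ^ 2 = w ^ 2 * a ^ 2 / w := by field_simp
    _ ≤ (2 * w + c ^ 2) * f ^ 2 / w := by gcongr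
    _ = (2 + c ^ 2 / w) * f ^ 2 := by field_simp

theorem sqrt_mul_le_sqrt_mul_of_mul_sq_le {w K a f : ℝ} (hw : 0 ≤ w) (hK : 0 ≤ K) (hf : 0 ≤ f)
    (h : w * a ^ 2 ≤ K * f ^ 2) : √w * a ≤ √K * f := by
  refine le_of_sq_le_sq ?_ (by positivity)
  rwa [mul_pow, mul_pow, Real.sq_sqrt hw, Real.sq_sqrt hK]

theorem resolvent_estimate_grad_general (lam0 ω a b f : ℝ)
    (hf : 0 ≤ f)
    (hω : max (lam0 ^ 2) 1 ≤ |ω|)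
    (h1 : a ^ 2 ≤ b * f) (h2 : |ω| * b ≤ lam0 * a + f) :
    Real.sqrt |ω| * a ≤ Real.sqrt (2 + lam0 ^ 2 / |ω|) * f := by
  have hω_pos : 0 < |ω| := zero_lt_one.trans_le ((le_max_right _ _).trans hω)
  have h_cross : |ω| * a ^ 2 ≤ lam0 * a * f + f ^ 2 :=
    calc |ω| * a ^ 2 ≤ |ω| * b * f := by rw [mul_assoc]; gcongr
      _ ≤ (lam0 * a + f) * f := by gcongr
      _ = lam0 * a * f + f ^ 2 := by ring
  exact sqrt_mul_le_sqrt_mul_of_mul_sq_le hω_pos.le (by positivity) hf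
    (mul_sq_le_of_le_mul_add_sq hω_pos h_cross)

/-- Estimate (3.10): under `a² ≤ b·f`, `|ω|·b ≤ λ₀·a + f` and `|ω| ≥ max{λ₀²,1}`,
one has `|ω|^{1/2}·a ≤ (2 + λ₀²/|ω|)^{1/2}·f`. -/
theorem resolvent_estimate_grad (lam0 ω a b f : ℝ) (hlam : 0 < lam0)
    (ha : 0 ≤ a) (hb : 0 ≤ b) (hf : 0 ≤ f)
    (hω : max (lam0 ^ 2) 1 ≤ |ω|)
    (h1 : a ^ 2 ≤ b * f) (h2 : |ω| * b ≤ lam0 * a + f) :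
    Real.sqrt |ω| * a ≤ Real.sqrt (2 + lam0 ^ 2 / |ω|) * f :=
  resolvent_estimate_grad_general lam0 ω a b f hf hω h1 h2
end

section
/- Let H be a complex Hilbert space, L₀ : D(L₀) ⊆ H → H closed, and ω₀ > 0. Suppose iω₀ is a simple eigenvalue of L₀ with normalized eigenvector v₀, and ikω₀ is not an eigenvalue of L₀ for every integer k with |k| ≥ 2, and 0 is excluded (functions have zero time-mean). Then the kernel of the operator Q(w) := ω₀ ∂_τ w − L₀ w, acting on 2π-periodic H-valued functions with zero mean (in the class W^{1,2}(0,2π;H) ∩ L²(0,2π;D(L₀))), is exactly the two-dimensional real span of v₁(τ) = Re(v₀ e^{iτ}) and v₂(τ) = Im(v₀ e^{iτ}). -/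
/-!
Let `A ℓ = (2π)⁻¹ ∫₀^{2π} e^{-iℓτ} w(τ) dτ` be the Fourier coefficients of a kernel element `w`.
Pairing `ω₀ w' = L₀ w` with `e^{-iℓτ}` and integrating by parts gives `L₀ (A ℓ) = iℓω₀ A ℓ`; since
`w'` need not be integrable, this is done in the graph of `L₀`: a function whose derivative stays
in the closed graph has its increments in the graph (its image in the quotient by the graph is
constant). Then `A 0 = 0` by the mean condition, `A ℓ = 0` for `|ℓ| ≥ 2` by non-resonance, and
`A 1 = z v₀` by simplicity. Fourier uniqueness (through the Hilbert basis of `L²` of the circle,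
applied to `τ ↦ ⟪x, w τ⟫`) gives `w τ = e^{iτ} A 1 + e^{-iτ} A (-1)`. The conjugation is not
assumed continuous, so reality is used pointwise: at `τ = 0` and `τ = π / 2` it forces
`A (-1) = Cj (A 1)`, i.e. `w = 2 Re (e^{iτ} z v₀)`.
-/

open Complex Real intervalIntegral

theorem exp_int_mul_ofReal_two_pi_mul_I (m : ℤ) : exp (m * (2 * π : ℝ) * I) = 1 := by
  rw [← exp_int_mul_two_pi_mul_I m]
  push_cast
  ring_nf

theorem periodic_exp_int_mul_I (k : ℤ) :
    Function.Periodic (fun τ : ℝ => exp (k * τ * I)) (2 * π) := by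
  intro τ
  simp only
  rw [ofReal_add, mul_add, add_mul, Complex.exp_add, exp_int_mul_ofReal_two_pi_mul_I, mul_one]

theorem integral_exp_int_mul_I (m : ℤ) :
    ∫ τ in (0)..(2 * π), exp (m * τ * I) = if m = 0 then ((2 * π : ℝ) : ℂ) else 0 := by
  split_ifs with hm
  · simp [hm]
  · have hc : (m * I : ℂ) ≠ 0 := by simp [hm]
    simp_rw [mul_right_comm _ _ I, integral_exp_mul_complex hc, ofReal_zero, mul_zero,
      Complex.exp_zero, ← mul_right_comm _ _ I, exp_int_mul_ofReal_two_pi_mul_I, sub_self,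
      zero_div]

theorem conj_exp_ofReal_mul_I (τ : ℝ) : starRingEnd ℂ (exp (τ * I)) = exp (-(τ * I)) := by
  rw [← exp_conj, map_mul, conj_ofReal, conj_I, mul_neg]

theorem hasDerivAt_exp_ofReal_mul (c : ℂ) (t : ℝ) :
    HasDerivAt (fun s : ℝ => exp (s * c)) (c * exp (t * c)) t := by
  simpa [mul_comm] using ((hasDerivAt_id (t : ℂ)).mul_const c).cexp.comp_ofReal

theorem eq_zero_of_forall_exp_mul_I_smul_eq {E : Type*} [AddCommGroup E] [Module ℂ E] {x y : E}
    (h : ∀ τ : ℝ, exp (τ * I) • x = exp (-(τ * I)) • y) : x = 0 ∧ y = 0 := by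
  have h₀ : x = y := by simpa using h 0
  have h₁ := h (π / 2)
  rw [ofReal_div, ofReal_ofNat, exp_pi_div_two_mul_I, ← neg_mul, ← neg_div,
    exp_neg_pi_div_two_mul_I, h₀] at h₁
  have h₂ : (2 * I) • y = 0 := by linear_combination (norm := module) h₁
  have hy : y = 0 := (smul_eq_zero.mp h₂).resolve_left (by simp)
  exact ⟨h₀.trans hy, hy⟩

section Fourier

variable {E : Type*} [NormedAddCommGroup E] [NormedSpace ℂ E]

noncomputable def fourierCoeffTwoPi (w : ℝ → E) (n : ℤ) : E :=
  (2 * π)⁻¹ • ∫ τ in (0)..(2 * π), exp (-(n * τ * I)) • w τ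

theorem fourierCoeffTwoPi_sub {u v : ℝ → E} (hu : Continuous u) (hv : Continuous v) (n : ℤ) :
    fourierCoeffTwoPi (u - v) n = fourierCoeffTwoPi u n - fourierCoeffTwoPi v n := by
  simp_rw [fourierCoeffTwoPi, Pi.sub_apply, smul_sub]
  rw [integral_sub ((by fun_prop : Continuous _).intervalIntegrable _ _)
    ((by fun_prop : Continuous _).intervalIntegrable _ _), smul_sub]

variable [CompleteSpace E]

theorem ContinuousLinearMap.fourierCoeffTwoPi_comp {F : Type*} [NormedAddCommGroup F]
    [NormedSpace ℂ F] [CompleteSpace F] (T : E →L[ℂ] F) {w : ℝ → E} (hw : Continuous w) (n : ℤ) :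
    fourierCoeffTwoPi (T ∘ w) n = T (fourierCoeffTwoPi w n) := by
  simp_rw [fourierCoeffTwoPi, Function.comp_apply, ← map_smul]
  rw [T.intervalIntegral_comp_comm ((by fun_prop : Continuous _).intervalIntegrable _ _),
    T.map_smul_of_tower]

theorem fourierCoeffTwoPi_sum_exp_smul (s : Finset ℤ) (c : ℤ → E) (n : ℤ) :
    fourierCoeffTwoPi (fun τ => ∑ k ∈ s, exp (k * τ * I) • c k) n = if n ∈ s then c n else 0 := by
  have hterm : ∀ (k : ℤ) (τ : ℝ), exp (-(n * τ * I)) • exp (k * τ * I) • c k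
      = exp ((k - n : ℤ) * τ * I) • c k := by
    intro k τ
    rw [smul_smul, ← Complex.exp_add]
    push_cast
    ring_nf
  simp_rw [fourierCoeffTwoPi, Finset.smul_sum, hterm]
  rw [integral_finsetSum fun k _ => (by fun_prop : Continuous _).intervalIntegrable _ _]
  simp_rw [intervalIntegral.integral_smul_const]
  rw [Finset.sum_congr rfl fun k _ => by rw [integral_exp_int_mul_I (k - n)]]
  simp_rw [sub_eq_zero, ite_smul, zero_smul, Finset.sum_ite_eq']
  split_ifs
  · rw [Complex.coe_smul, inv_smul_smul₀ two_pi_pos.ne']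
  · rw [smul_zero]

end Fourier

theorem Function.Periodic.eq_zero_of_fourierCoeffTwoPi_eq_zero {g : ℝ → ℂ}
    (hper : Function.Periodic g (2 * π)) (hg : Continuous g)
    (h : ∀ n, fourierCoeffTwoPi g n = 0) : g = 0 := by
  have : Fact (0 < 2 * π) := ⟨two_pi_pos⟩
  let G : C(AddCircle (2 * π), ℂ) := ⟨hper.lift, hg.quotient_liftOn' _⟩
  have hG : ∀ n, fourierCoeff G n = 0 := fun n => by
    rw [fourierCoeff_eq_intervalIntegral _ _ 0, zero_add, ← h n, fourierCoeffTwoPi, one_div]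
    congr 1
    refine integral_congr fun τ _ => ?_
    simp only [G, fourier_coe_apply]
    congr 2
    push_cast
    field_simp
  have hLp : ContinuousMap.toLp 2 AddCircle.haarAddCircle ℂ G = 0 :=
    fourierBasis.repr.injective <| by
      ext n
      rw [map_zero, fourierBasis_repr, fourierCoeff_toLp, hG]
      rfl
  have hG0 : G = 0 := ContinuousMap.toLp_injective _ (hLp.trans (map_zero _).symm)
  funext τ
  exact (hper.lift_coe τ).symm.trans congr($hG0 (τ : AddCircle (2 * π)))

section Hilbert

variable {H : Type*} [NormedAddCommGroup H] [InnerProductSpace ℂ H] [CompleteSpace H]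

theorem Function.Periodic.eq_of_fourierCoeffTwoPi_eq {u v : ℝ → H}
    (hu : Function.Periodic u (2 * π)) (hv : Function.Periodic v (2 * π))
    (huc : Continuous u) (hvc : Continuous v)
    (h : ∀ n, fourierCoeffTwoPi u n = fourierCoeffTwoPi v n) : u = v := by
  refine funext fun τ => sub_eq_zero.mp (inner_self_eq_zero (𝕜 := ℂ).mp ?_)
  let g : ℝ → ℂ := innerSL ℂ (u τ - v τ) ∘ (u - v)
  have hg : g = 0 := (hu.sub hv).comp _ |>.eq_zero_of_fourierCoeffTwoPi_eq_zero (by fun_prop)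
    fun n => by rw [ContinuousLinearMap.fourierCoeffTwoPi_comp _ (huc.sub hvc),
      fourierCoeffTwoPi_sub huc hvc, h, sub_self, map_zero]
  exact congr_fun hg τ

theorem Function.Periodic.eq_sum_of_fourierCoeffTwoPi_eq_zero {w : ℝ → H}
    (hper : Function.Periodic w (2 * π)) (hw : Continuous w) (s : Finset ℤ)
    (h : ∀ n ∉ s, fourierCoeffTwoPi w n = 0) :
    w = fun τ : ℝ => ∑ k ∈ s, exp (k * τ * I) • fourierCoeffTwoPi w k := by
  refine hper.eq_of_fourierCoeffTwoPi_eq (fun τ => ?_) hw (by fun_prop) fun n => ?_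
  · simp_rw [periodic_exp_int_mul_I _ τ]
  · rw [fourierCoeffTwoPi_sum_exp_smul]
    split_ifs with hn
    · rfl
    · exact h n hn

end Hilbert

theorem Submodule.sub_mem_of_hasDerivAt {F : Type*} [NormedAddCommGroup F] [NormedSpace ℝ F]
    {S : Submodule ℝ F} (hS : IsClosed (S : Set F)) {f f' : ℝ → F}
    (hf : ∀ t, HasDerivAt f (f' t) t) (hf' : ∀ t, f' t ∈ S) (a b : ℝ) : f b - f a ∈ S := by
  have : IsClosed (S : Set F) := hS
  have hQ : ∀ t, HasDerivAt (S.mkQL ∘ f) 0 t := fun t => by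
    simpa [(Submodule.Quotient.mk_eq_zero S).mpr (hf' t)] using
      S.mkQL.hasFDerivAt.comp_hasDerivAt t (hf t)
  exact (Submodule.Quotient.eq S).mp <|
    is_const_of_deriv_eq_zero (fun t => (hQ t).differentiableAt) (fun t => (hQ t).deriv) b a

section GraphMk

variable {R E F : Type*} [CommRing R] [AddCommGroup E] [Module R E] [AddCommGroup F] [Module R F]
  {D : Submodule R E}

theorem LinearPMap.mem_graph_mk_iff {L : D →ₗ[R] F} {x : E} {y : F} :
    (x, y) ∈ (LinearPMap.mk D L).graph ↔ ∃ h : x ∈ D, L ⟨x, h⟩ = y := by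
  simp [LinearPMap.mem_graph_iff]

theorem LinearPMap.coe_graph_mk (L : D →ₗ[R] F) :
    ((LinearPMap.mk D L).graph : Set (E × F)) = {p | ∃ h : p.1 ∈ D, L ⟨p.1, h⟩ = p.2} :=
  Set.ext fun _ => LinearPMap.mem_graph_mk_iff

theorem LinearPMap.mem_ker_sub_smul_of_mem_graph_mk {L : D →ₗ[R] E} {c : R} {x : E}
    (h : (x, c • x) ∈ (LinearPMap.mk D L).graph) :
    ∃ hx : x ∈ D, ⟨x, hx⟩ ∈ LinearMap.ker (L - c • D.subtype) := by
  obtain ⟨hx, hL⟩ := LinearPMap.mem_graph_mk_iff.mp h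
  exact ⟨hx, by simp [hL]⟩

theorem LinearPMap.exists_eq_smul_of_mem_graph_mk {L : D →ₗ[R] E} {c : R} {v : D}
    (hker : LinearMap.ker (L - c • D.subtype) = R ∙ v) {x : E}
    (h : (x, c • x) ∈ (LinearPMap.mk D L).graph) : ∃ z : R, x = z • (v : E) := by
  obtain ⟨hx, hmem⟩ := LinearPMap.mem_ker_sub_smul_of_mem_graph_mk h
  rw [hker] at hmem
  obtain ⟨z, hz⟩ := Submodule.mem_span_singleton.mp hmem
  exact ⟨z, congr_arg Subtype.val hz.symm⟩

theorem LinearPMap.eq_zero_of_mem_graph_mk {L : D →ₗ[R] E} {c : R}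
    (hker : LinearMap.ker (L - c • D.subtype) = ⊥) {x : E}
    (h : (x, c • x) ∈ (LinearPMap.mk D L).graph) : x = 0 := by
  obtain ⟨hx, hmem⟩ := LinearPMap.mem_ker_sub_smul_of_mem_graph_mk h
  rw [hker, Submodule.mem_bot] at hmem
  exact congr_arg Subtype.val hmem

end GraphMk

theorem LinearPMap.IsClosed.integral_exp_smul_mem_graph {E : Type*} [NormedAddCommGroup E]
    [NormedSpace ℂ E] [CompleteSpace E] {T : E →ₗ.[ℂ] E} (hT : T.IsClosed)
    {w w' : ℝ → E} {ω : ℝ} (hd : ∀ τ, HasDerivAt w (w' τ) τ)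
    (hper : Function.Periodic w (2 * π)) (hgraph : ∀ τ, (w τ, ω • w' τ) ∈ T.graph) (n : ℤ) :
    (∫ τ in (0)..(2 * π), exp (-(n * τ * I)) • w τ,
      (I * n * ω) • ∫ τ in (0)..(2 * π), exp (-(n * τ * I)) • w τ) ∈ T.graph := by
  set e : ℝ → ℂ := fun t => exp (-(n * t * I))
  set Φ : ℝ → E := fun t => ∫ τ in (0)..t, e τ • w τ
  have hw : Continuous w := continuous_iff_continuousAt.2 fun τ => (hd τ).continuousAt
  have he : ∀ t, HasDerivAt e (-(n * I) * e t) t := fun t => by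
    convert hasDerivAt_exp_ofReal_mul (-(n * I)) t using 1
    · funext s
      simp only [e]
      ring_nf
    · simp only [e]
      ring_nf
  have hΦ : ∀ t, HasDerivAt Φ (e t • w t) t := fun t =>
    ((by fun_prop : Continuous fun τ => e τ • w τ).integral_hasStrictDerivAt 0 t).hasDerivAt
  have hF : ∀ t, HasDerivAt (fun t => (Φ t, ω • (e t • w t) + (I * n * ω) • Φ t))
      (e t • (w t, ω • w' t)) t := fun t => by
    refine ((hΦ t).prodMk ((((he t).smul (hd t)).const_smul ω).add
      ((hΦ t).const_smul (I * n * ω)))).congr_deriv ?_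
    ext
    · rfl
    · simp only [Prod.smul_snd]
      module
  have hmem := Submodule.sub_mem_of_hasDerivAt (S := T.graph.restrictScalars ℝ) hT hF
    (fun t => T.graph.smul_mem (e t) (hgraph t)) 0 (2 * π)
  have hΦ0 : Φ 0 = 0 := integral_same
  have he0 : e 0 = 1 := by simp [e]
  have he2π : e (2 * π) = 1 := by
    rw [← exp_int_mul_ofReal_two_pi_mul_I (-n)]
    simp only [e]
    push_cast
    ring_nf
  simp only [hΦ0, he0, he2π, hper.eq, one_smul, smul_zero, add_zero, Prod.mk_sub_mk, sub_zero,
    add_sub_cancel_left] at hmem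
  exact hmem

theorem LinearPMap.IsClosed.fourierCoeffTwoPi_mem_graph {E : Type*} [NormedAddCommGroup E]
    [NormedSpace ℂ E] [CompleteSpace E] {T : E →ₗ.[ℂ] E} (hT : T.IsClosed)
    {w w' : ℝ → E} {ω : ℝ} (hd : ∀ τ, HasDerivAt w (w' τ) τ)
    (hper : Function.Periodic w (2 * π)) (hgraph : ∀ τ, (w τ, ω • w' τ) ∈ T.graph) (n : ℤ) :
    (fourierCoeffTwoPi w n, (I * n * ω) • fourierCoeffTwoPi w n) ∈ T.graph := by
  rw [fourierCoeffTwoPi, smul_comm, ← Prod.smul_mk]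
  exact (T.graph.restrictScalars ℝ).smul_mem _ (hT.integral_exp_smul_mem_graph hd hper hgraph n)

section RealMode

variable {E : Type*} [NormedAddCommGroup E] [NormedSpace ℂ E] (C : E →ₗ⋆[ℂ] E)

-- `realMode C v τ` is `2 Re (e^{iτ} v)` for the real structure given by `C`.
noncomputable def realMode (v : E) (τ : ℝ) : E := exp (τ * I) • v + C (exp (τ * I) • v)

theorem realMode_apply (v : E) (τ : ℝ) :
    realMode C v τ = exp (τ * I) • v + exp (-(τ * I)) • C v := by
  rw [realMode, map_smulₛₗ, conj_exp_ofReal_mul_I]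

theorem hasDerivAt_realMode (v : E) (τ : ℝ) :
    HasDerivAt (realMode C v) (realMode C (I • v) τ) τ := by
  simp_rw [funext (realMode_apply C v), realMode_apply, map_smulₛₗ, conj_I]
  convert ((hasDerivAt_exp_ofReal_mul I τ).smul_const v).add
    ((hasDerivAt_exp_ofReal_mul (-I) τ).smul_const (C v)) using 1
  · ext t
    simp [mul_neg]
  · simp only [smul_smul, mul_neg, neg_mul]
    module

theorem realMode_periodic (v : E) : Function.Periodic (realMode C v) (2 * π) := by
  intro τ
  simp only [realMode, ofReal_add, add_mul, Complex.exp_add, ofReal_mul, ofReal_ofNat,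
    exp_two_pi_mul_I, mul_one]

theorem integral_realMode [CompleteSpace E] (v : E) :
    ∫ τ in (0)..(2 * π), realMode C v τ = 0 := by
  have h₁ : ∫ τ in (0)..(2 * π), exp (τ * I) = 0 := by simpa using integral_exp_int_mul_I 1
  have h₂ : ∫ τ in (0)..(2 * π), exp (-(τ * I)) = 0 := by simpa using integral_exp_int_mul_I (-1)
  simp_rw [realMode_apply]
  rw [integral_add ((by fun_prop : Continuous _).intervalIntegrable _ _)
    ((by fun_prop : Continuous _).intervalIntegrable _ _), intervalIntegral.integral_smul_const,
    intervalIntegral.integral_smul_const, h₁, h₂, zero_smul, zero_smul, add_zero]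

theorem conj_realMode (hC : ∀ x, C (C x) = x) (v : E) (τ : ℝ) :
    C (realMode C v τ) = realMode C v τ := by
  rw [realMode, map_add, hC, add_comm]

theorem realMode_smul_mem_graph {T : E →ₗ.[ℂ] E}
    (hCT : ∀ p ∈ T.graph, (C p.1, C p.2) ∈ T.graph) {ω : ℝ} {v : E}
    (hv : (v, (I * ω) • v) ∈ T.graph) (z : ℂ) (τ : ℝ) :
    (realMode C (z • v) τ, ω • realMode C (I • z • v) τ) ∈ T.graph := by
  set x := (exp (τ * I) * z) • v
  have hx : (x, (I * ω) • x) ∈ T.graph := by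
    simpa [x, smul_comm (I * ω)] using T.graph.smul_mem (exp (τ * I) * z) hv
  have hsplit : (realMode C (z • v) τ, ω • realMode C (I • z • v) τ) =
      (x, (I * ω) • x) + (C x, C ((I * ω) • x)) := by
    simp only [realMode, x, Prod.mk_add_mk, map_smulₛₗ, map_mul, conj_ofReal, conj_I,
      Prod.mk.injEq]
    constructor <;> module
  rw [hsplit]
  exact T.graph.add_mem hx (hCT _ hx)

theorem realMode_smul_eq_smul_add_smul (α β : ℝ) (v : E) (τ : ℝ) :
    realMode C ((((α : ℂ) - β * I) / 2) • v) τ =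
      α • ((1 / 2 : ℝ) • (exp (I * τ) • v + C (exp (I * τ) • v))) +
        β • ((1 / 2 : ℝ) • ((-I) • (exp (I * τ) • v) + C ((-I) • (exp (I * τ) • v)))) := by
  simp only [realMode, map_smulₛₗ, map_div₀, map_sub, map_mul, map_neg, conj_I, conj_ofReal,
    map_ofNat, mul_comm I (τ : ℂ)]
  module

theorem eq_realMode_of_eq_exp_smul_add {w : ℝ → E} {a b : E}
    (hw : ∀ τ, w τ = exp (τ * I) • a + exp (-(τ * I)) • b) (hreal : ∀ τ, C (w τ) = w τ) :
    w = realMode C a := by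
  have h : ∀ τ : ℝ, exp (τ * I) • (a - C b) = exp (-(τ * I)) • (C a - b) := fun τ => by
    have := hreal τ
    have hconj : starRingEnd ℂ (exp (-(τ * I))) = exp (τ * I) := by
      rw [← conj_exp_ofReal_mul_I, conj_conj]
    rw [hw, map_add, map_smulₛₗ, map_smulₛₗ, conj_exp_ofReal_mul_I, hconj] at this
    linear_combination (norm := module) -this
  have hb : b = C a := (sub_eq_zero.mp (eq_zero_of_forall_exp_mul_I_smul_eq h).2).symm
  funext τ
  rw [hw, hb, realMode_apply]

end RealMode

theorem exists_eq_realMode_of_periodic_solution {H : Type*} [NormedAddCommGroup H]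
    [InnerProductSpace ℂ H] [CompleteSpace H] {T : H →ₗ.[ℂ] H} (hT : T.IsClosed)
    (C : H →ₗ⋆[ℂ] H) {ω : ℝ} {v : H}
    (hsimple : ∀ x, (x, (I * ω) • x) ∈ T.graph → ∃ z : ℂ, x = z • v)
    (hnotk : ∀ k : ℤ, 2 ≤ |k| → ∀ x, (x, (I * k * ω) • x) ∈ T.graph → x = 0)
    {w w' : ℝ → H} (hd : ∀ τ, HasDerivAt w (w' τ) τ) (hreal : ∀ τ, C (w τ) = w τ)
    (hper : Function.Periodic w (2 * π)) (hmean : ∫ τ in (0)..(2 * π), w τ = 0)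
    (hgraph : ∀ τ, (w τ, ω • w' τ) ∈ T.graph) :
    ∃ z : ℂ, w = realMode C (z • v) := by
  set A := fourierCoeffTwoPi w
  have hA := hT.fourierCoeffTwoPi_mem_graph hd hper hgraph
  have hA0 : A 0 = 0 := by simp [A, fourierCoeffTwoPi, hmean]
  have hAn : ∀ n ∉ ({1, -1} : Finset ℤ), A n = 0 := fun n hn => by
    rcases eq_or_ne n 0 with rfl | h0
    · exact hA0
    · refine hnotk n ?_ _ (hA n)
      simp only [Finset.mem_insert, Finset.mem_singleton, not_or] at hn
      rcases abs_cases n with ⟨h, _⟩ | ⟨h, _⟩ <;> omega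
  have hw : Continuous w := continuous_iff_continuousAt.2 fun τ => (hd τ).continuousAt
  have hsum := hper.eq_sum_of_fourierCoeffTwoPi_eq_zero hw _ hAn
  have hw' : ∀ τ : ℝ, w τ = exp (τ * I) • A 1 + exp (-(τ * I)) • A (-1) := fun τ => by
    rw [congr_fun hsum τ, Finset.sum_pair (by decide)]
    simp only [Int.cast_one, Int.cast_neg, one_mul, neg_mul]
    rfl
  obtain ⟨z, hz⟩ := hsimple (A 1) (by simpa using hA 1)
  exact ⟨z, hz ▸ eq_realMode_of_eq_exp_smul_add C hw' hreal⟩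

theorem kernel_of_time_periodic_operator_general
    {H : Type*} [NormedAddCommGroup H] [InnerProductSpace ℂ H] [CompleteSpace H]
    (D : Submodule ℂ H) (L : D →ₗ[ℂ] H)
    (hclosed : IsClosed {p : H × H | ∃ h : p.1 ∈ D, L ⟨p.1, h⟩ = p.2})
    (Cj : H → H)
    (hCadd : ∀ x y, Cj (x + y) = Cj x + Cj y)
    (hCsmul : ∀ (z : ℂ) (x : H), Cj (z • x) = (starRingEnd ℂ z) • Cj x)
    (hCinvol : ∀ x, Cj (Cj x) = x)
    (hCD : ∀ x ∈ D, Cj x ∈ D)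
    (hCL : ∀ u : D, Cj (L u) = L ⟨Cj (u : H), hCD _ u.2⟩)
    (ω₀ : ℝ)
    (v₀ : D)
    (heig : L v₀ = (Complex.I * (ω₀ : ℂ)) • (v₀ : H))
    (hsimple : LinearMap.ker (L - (Complex.I * (ω₀ : ℂ)) • D.subtype) =
      Submodule.span ℂ {v₀})
    (hnotk : ∀ k : ℤ, 2 ≤ |k| →
      LinearMap.ker (L - (Complex.I * (k : ℂ) * (ω₀ : ℂ)) • D.subtype) = ⊥)
    (v₁ v₂ : ℝ → H)
    (hv₁ : ∀ τ : ℝ, v₁ τ = ((1:ℝ) / 2) •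
      (Complex.exp (Complex.I * τ) • (v₀ : H) + Cj (Complex.exp (Complex.I * τ) • (v₀ : H))))
    (hv₂ : ∀ τ : ℝ, v₂ τ = ((1:ℝ) / 2) •
      ((-Complex.I) • (Complex.exp (Complex.I * τ) • (v₀ : H)) +
        Cj ((-Complex.I) • (Complex.exp (Complex.I * τ) • (v₀ : H))))) :
    {w : ℝ → H | ∃ w' : ℝ → H,
        (∀ τ, HasDerivAt w (w' τ) τ) ∧
        (∀ τ, Cj (w τ) = w τ) ∧
        (∀ τ, w (τ + 2 * Real.pi) = w τ) ∧
        (∫ τ in (0:ℝ)..(2 * Real.pi), w τ) = 0 ∧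
        ∃ hmem : ∀ τ, w τ ∈ D, ∀ τ, ω₀ • w' τ = L ⟨w τ, hmem τ⟩} =
      {w : ℝ → H | ∃ α β : ℝ, w = fun τ => α • v₁ τ + β • v₂ τ} := by
  let C : H →ₗ⋆[ℂ] H := { toFun := Cj, map_add' := hCadd, map_smul' := hCsmul }
  let T : H →ₗ.[ℂ] H := ⟨D, L⟩
  have hT : T.IsClosed := by rw [LinearPMap.IsClosed, LinearPMap.coe_graph_mk]; exact hclosed
  have hCT : ∀ p ∈ T.graph, (C p.1, C p.2) ∈ T.graph := by
    rintro ⟨x, y⟩ hp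
    obtain ⟨hx, rfl⟩ := LinearPMap.mem_graph_mk_iff.mp hp
    exact LinearPMap.mem_graph_mk_iff.mpr ⟨hCD x hx, (hCL ⟨x, hx⟩).symm⟩
  have hspan : ∀ α β : ℝ, (fun τ => α • v₁ τ + β • v₂ τ) =
      realMode C ((((α : ℂ) - β * I) / 2) • (v₀ : H)) := fun α β => funext fun τ => by
    rw [hv₁, hv₂]
    exact (realMode_smul_eq_smul_add_smul C α β _ τ).symm
  ext w
  simp only [Set.mem_ofPred_eq, hspan]
  constructor
  · rintro ⟨w', hd, hreal, hper, hmean, hmem, hode⟩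
    obtain ⟨z, rfl⟩ := exists_eq_realMode_of_periodic_solution hT C
      (fun _ => LinearPMap.exists_eq_smul_of_mem_graph_mk hsimple)
      (fun k hk _ => LinearPMap.eq_zero_of_mem_graph_mk (hnotk k hk)) hd hreal hper hmean
      fun τ => LinearPMap.mem_graph_mk_iff.mpr ⟨hmem τ, (hode τ).symm⟩
    exact ⟨2 * z.re, -(2 * z.im), by congr 2; apply Complex.ext <;> simp⟩
  · rintro ⟨α, β, rfl⟩
    have hsol := realMode_smul_mem_graph C hCT (LinearPMap.mem_graph_mk_iff.mpr ⟨v₀.2, heig⟩)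
      (((α : ℂ) - β * I) / 2)
    exact ⟨_, hasDerivAt_realMode C _, conj_realMode C hCinvol _, realMode_periodic C _,
      integral_realMode C _, fun τ => (LinearPMap.mem_graph_mk_iff.mp (hsol τ)).1,
      fun τ => (LinearPMap.mem_graph_mk_iff.mp (hsol τ)).2.symm⟩

/-- Lemma 3.6. Let `L₀` be a closed operator on a complex Hilbert space `H` carrying a
conjugation `Cj` (an antilinear involution, commuting with `L₀`), let `ω₀ > 0`, suppose
`iω₀` is a simple eigenvalue of `L₀` with eigenvector `v₀`, and `ikω₀` is not an eigenvalue
for every integer `k` with `|k| ≥ 2`. Then the kernel of `Q(w) = ω₀ ∂_τ w − L₀ w` on real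
(`Cj`-fixed) `2π`-periodic `H`-valued functions with zero mean is exactly the
two-dimensional real span of `v₁(τ) = Re(v₀ e^{iτ})` and `v₂(τ) = Im(v₀ e^{iτ})`. -/
theorem kernel_of_time_periodic_operator
    {H : Type*} [NormedAddCommGroup H] [InnerProductSpace ℂ H] [CompleteSpace H]
    (D : Submodule ℂ H) (L : D →ₗ[ℂ] H)
    (hclosed : IsClosed {p : H × H | ∃ h : p.1 ∈ D, L ⟨p.1, h⟩ = p.2})
    (Cj : H → H)
    (hCadd : ∀ x y, Cj (x + y) = Cj x + Cj y)
    (hCsmul : ∀ (z : ℂ) (x : H), Cj (z • x) = (starRingEnd ℂ z) • Cj x)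
    (hCinvol : ∀ x, Cj (Cj x) = x)
    (hCD : ∀ x ∈ D, Cj x ∈ D)
    (hCL : ∀ u : D, Cj (L u) = L ⟨Cj (u : H), hCD _ u.2⟩)
    (ω₀ : ℝ) (hω₀ : 0 < ω₀)
    (v₀ : D) (hv₀ne : (v₀ : H) ≠ 0)
    (heig : L v₀ = (Complex.I * (ω₀ : ℂ)) • (v₀ : H))
    (hsimple : LinearMap.ker (L - (Complex.I * (ω₀ : ℂ)) • D.subtype) =
      Submodule.span ℂ {v₀})
    (hnotk : ∀ k : ℤ, 2 ≤ |k| →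
      LinearMap.ker (L - (Complex.I * (k : ℂ) * (ω₀ : ℂ)) • D.subtype) = ⊥)
    (v₁ v₂ : ℝ → H)
    (hv₁ : ∀ τ : ℝ, v₁ τ = ((1:ℝ) / 2) •
      (Complex.exp (Complex.I * τ) • (v₀ : H) + Cj (Complex.exp (Complex.I * τ) • (v₀ : H))))
    (hv₂ : ∀ τ : ℝ, v₂ τ = ((1:ℝ) / 2) •
      ((-Complex.I) • (Complex.exp (Complex.I * τ) • (v₀ : H)) +
        Cj ((-Complex.I) • (Complex.exp (Complex.I * τ) • (v₀ : H))))) :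
    {w : ℝ → H | ∃ w' : ℝ → H,
        (∀ τ, HasDerivAt w (w' τ) τ) ∧
        (∀ τ, Cj (w τ) = w τ) ∧
        (∀ τ, w (τ + 2 * Real.pi) = w τ) ∧
        (∫ τ in (0:ℝ)..(2 * Real.pi), w τ) = 0 ∧
        ∃ hmem : ∀ τ, w τ ∈ D, ∀ τ, ω₀ • w' τ = L ⟨w τ, hmem τ⟩} =
      {w : ℝ → H | ∃ α β : ℝ, w = fun τ => α • v₁ τ + β • v₂ τ} :=
  kernel_of_time_periodic_operator_general D L hclosed Cj hCadd hCsmul hCinvol hCD hCL ω₀ v₀ heig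
    hsimple hnotk v₁ v₂ hv₁ hv₂
end

section
/- Let w be as in the previous statement, and suppose in addition that for all 0 ≤ s ≤ τ ≤ 2π, ‖∇w(τ)‖₂² − ‖∇w(s)‖₂² = ∫ₛ^τ ⟨∂_ξ w(ξ), PΔw(ξ)⟩ dξ (where ⟨·,·⟩ is interpreted with appropriate sign convention). Then max_{τ∈[0,2π]} ‖∇w(τ)‖₂² ≤ (1/ω) J_ω. -/
/-!
Integrating the identity `G τ - G s = ∫ₛ^τ ⟪∂w, Lw⟫` in `s` shows that `G τ` exceeds the mean of
`G` over a period by at most `∫ |⟪∂w, Lw⟫| ≤ J/(2ω)` (pointwise AM–GM). The mean is at most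
`J/(2ω)` as well: since `w` has zero mean, `‖w s‖ ≤ ∫ ‖∂w‖`, so `∫ G ≤ (∫ ‖∂w‖)(∫ ‖Lw‖)`, and
AM–GM applied to `‖∂w(u)‖ ‖Lw(v)‖` on the square bounds this product by `2π · J/(2ω)`.
-/

open scoped RealInnerProductSpace
open intervalIntegral

open Set
open MeasureTheory (volume)

theorem norm_intervalIntegral_le_of_mem_Icc {E : Type*} [NormedAddCommGroup E] [NormedSpace ℝ E]
    {f : ℝ → E} {a b c d : ℝ} (hf : IntervalIntegrable f volume a b)
    (hc : c ∈ Icc a b) (hd : d ∈ Icc a b) :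
    ‖∫ x in c..d, f x‖ ≤ ∫ x in a..b, ‖f x‖ := by
  have hab : a ≤ b := hc.1.trans hc.2
  have hsub : uIoc c d ⊆ uIoc a b :=
    uIoc_subset_uIoc_of_uIcc_subset_uIcc ((uIcc_subset_Icc hc hd).trans_eq (uIcc_of_le hab).symm)
  rw [integral_of_le hab, ← uIoc_of_le hab]
  exact norm_integral_le_integral_norm_uIoc.trans <| MeasureTheory.setIntegral_mono_set
    hf.norm.def' (.of_forall fun x => norm_nonneg _) hsub.eventuallyLE

theorem mul_le_sq_add_sq_div_two_mul {ω : ℝ} (hω : 0 < ω) (x y : ℝ) :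
    x * y ≤ (ω ^ 2 * x ^ 2 + y ^ 2) / (2 * ω) := by
  rw [le_div_iff₀ (by positivity)]
  nlinarith [sq_nonneg (ω * x - y)]

theorem integral_abs_inner_le {E : Type*} [NormedAddCommGroup E] [InnerProductSpace ℝ E]
    {f g : ℝ → E} {a b ω : ℝ} (hf : Continuous f) (hg : Continuous g) (hab : a ≤ b)
    (hω : 0 < ω) :
    ∫ x in a..b, |⟪f x, g x⟫| ≤ (∫ x in a..b, (ω ^ 2 * ‖f x‖ ^ 2 + ‖g x‖ ^ 2)) / (2 * ω) := by
  rw [← integral_div]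
  exact integral_mono_on hab (Continuous.intervalIntegrable (by fun_prop) _ _)
    (Continuous.intervalIntegrable (by fun_prop) _ _) fun x _ =>
    (abs_real_inner_le_norm _ _).trans (mul_le_sq_add_sq_div_two_mul hω _ _)

theorem integral_mul_integral_le {f g : ℝ → ℝ} {a b ω : ℝ} (hf : Continuous f) (hg : Continuous g)
    (hab : a ≤ b) (hω : 0 < ω) :
    (∫ x in a..b, f x) * (∫ x in a..b, g x) ≤
      (b - a) * (∫ x in a..b, (ω ^ 2 * f x ^ 2 + g x ^ 2)) / (2 * ω) := by
  have inner_bound : ∀ x, f x * ∫ y in a..b, g y ≤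
      ((b - a) * ω ^ 2 * f x ^ 2 + ∫ y in a..b, g y ^ 2) / (2 * ω) := by
    intro x
    calc f x * ∫ y in a..b, g y = ∫ y in a..b, f x * g y := (integral_const_mul _ _).symm
      _ ≤ ∫ y in a..b, (ω ^ 2 * f x ^ 2 + g y ^ 2) / (2 * ω) :=
        integral_mono_on hab (Continuous.intervalIntegrable (by fun_prop) _ _)
          (Continuous.intervalIntegrable (by fun_prop) _ _) fun y _ =>
          mul_le_sq_add_sq_div_two_mul hω _ _
      _ = _ := by
        rw [integral_div, integral_add (Continuous.intervalIntegrable (by fun_prop) _ _)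
          (Continuous.intervalIntegrable (by fun_prop) _ _)]
        simp only [integral_const, smul_eq_mul]
        ring
  calc (∫ x in a..b, f x) * (∫ x in a..b, g x)
      = ∫ x in a..b, f x * ∫ y in a..b, g y := (integral_mul_const _ _).symm
    _ ≤ ∫ x in a..b, ((b - a) * ω ^ 2 * f x ^ 2 + ∫ y in a..b, g y ^ 2) / (2 * ω) :=
        integral_mono_on hab (Continuous.intervalIntegrable (by fun_prop) _ _)
          (Continuous.intervalIntegrable (by fun_prop) _ _) fun x _ => inner_bound x
    _ = _ := by
        rw [integral_div, integral_add (Continuous.intervalIntegrable (by fun_prop) _ _)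
          (Continuous.intervalIntegrable (by fun_prop) _ _),
          integral_add (Continuous.intervalIntegrable (by fun_prop) _ _)
          (Continuous.intervalIntegrable (by fun_prop) _ _), integral_const_mul, integral_const_mul]
        simp only [integral_const, smul_eq_mul]
        ring

theorem norm_le_integral_norm_deriv_of_integral_eq_zero {E : Type*} [NormedAddCommGroup E]
    [NormedSpace ℝ E] [CompleteSpace E] {w dw : ℝ → E} {a b s : ℝ}
    (hderiv : ∀ x ∈ Icc a b, HasDerivAt w (dw x) x) (hdw : IntervalIntegrable dw volume a b)
    (hab : a < b) (hmean : ∫ x in a..b, w x = 0) (hs : s ∈ Icc a b) :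
    ‖w s‖ ≤ ∫ x in a..b, ‖dw x‖ := by
  have hw : ContinuousOn w (Icc a b) := fun x hx => (hderiv x hx).continuousAt.continuousWithinAt
  have hdiff : ∀ u ∈ Icc a b, ‖w s - w u‖ ≤ ∫ x in a..b, ‖dw x‖ := fun u hu => by
    have hsub : uIcc u s ⊆ Icc a b := uIcc_subset_Icc hu hs
    rw [← integral_eq_sub_of_hasDerivAt (fun x hx => hderiv x (hsub hx))
      (hdw.mono_set ((uIcc_of_le hab.le).symm ▸ hsub))]
    exact norm_intervalIntegral_le_of_mem_Icc hdw hu hs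
  have hrep : (b - a) • w s = ∫ u in a..b, (w s - w u) := by
    rw [integral_sub intervalIntegrable_const
      ((hw.mono (uIcc_of_le hab.le).subset).intervalIntegrable), hmean, sub_zero, integral_const]
  have hmul : (b - a) * ‖w s‖ ≤ (b - a) * ∫ x in a..b, ‖dw x‖ := by
    calc (b - a) * ‖w s‖ = ‖∫ u in a..b, (w s - w u)‖ := by
          rw [← hrep, norm_smul, Real.norm_of_nonneg (sub_nonneg.2 hab.le)]
      _ ≤ (∫ x in a..b, ‖dw x‖) * |b - a| := norm_integral_le_of_norm_le_const fun u hu =>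
          hdiff u (Ioc_subset_Icc_self ((uIoc_of_le hab.le) ▸ hu))
      _ = _ := by rw [abs_of_pos (sub_pos.2 hab), mul_comm]
  exact le_of_mul_le_mul_left hmul (sub_pos.2 hab)

theorem integral_neg_inner_le_of_integral_eq_zero {E : Type*} [NormedAddCommGroup E]
    [InnerProductSpace ℝ E] [CompleteSpace E] {w dw L : ℝ → E} {a b ω : ℝ}
    (hderiv : ∀ x, HasDerivAt w (dw x) x) (hdw : Continuous dw) (hL : Continuous L)
    (hab : a < b) (hmean : ∫ x in a..b, w x = 0) (hω : 0 < ω) :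
    ∫ x in a..b, -⟪L x, w x⟫ ≤
      (b - a) * (∫ x in a..b, (ω ^ 2 * ‖dw x‖ ^ 2 + ‖L x‖ ^ 2)) / (2 * ω) := by
  have hw : Continuous w := continuous_iff_continuousAt.2 fun x => (hderiv x).continuousAt
  calc ∫ x in a..b, -⟪L x, w x⟫ ≤ ∫ x in a..b, ‖L x‖ * ∫ y in a..b, ‖dw y‖ :=
        integral_mono_on hab.le (Continuous.intervalIntegrable (by fun_prop) _ _)
          (Continuous.intervalIntegrable (by fun_prop) _ _) fun x hx =>
          (neg_le_abs _).trans <| (abs_real_inner_le_norm _ _).trans <|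
            mul_le_mul_of_nonneg_left (norm_le_integral_norm_deriv_of_integral_eq_zero
              (fun y _ => hderiv y) (hdw.intervalIntegrable _ _) hab hmean hx) (norm_nonneg _)
    _ = (∫ y in a..b, ‖dw y‖) * ∫ x in a..b, ‖L x‖ := by
        rw [intervalIntegral.integral_mul_const, mul_comm]
    _ ≤ _ := integral_mul_integral_le hdw.norm hL.norm hab.le hω

theorem le_add_of_sub_le_of_integral_le {G : ℝ → ℝ} {a b t K M : ℝ} (hab : a < b)
    (hG : IntervalIntegrable G volume a b) (hosc : ∀ s ∈ Icc a b, G t - G s ≤ K)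
    (hint : ∫ s in a..b, G s ≤ (b - a) * M) :
    G t ≤ M + K := by
  have : (b - a) * (G t - K) ≤ (b - a) * M := by
    calc (b - a) * (G t - K) = ∫ _ in a..b, (G t - K) := by rw [integral_const, smul_eq_mul]
      _ ≤ ∫ s in a..b, G s :=
        integral_mono_on hab.le intervalIntegrable_const hG fun s hs => by linarith [hosc s hs]
      _ ≤ _ := hint
  linarith [le_of_mul_le_mul_left this (sub_pos.2 hab)]

theorem gradient_max_estimate_general
    {E : Type*} [NormedAddCommGroup E] [InnerProductSpace ℝ E] [CompleteSpace E]
    (ω : ℝ) (hω : 0 < ω)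
    (w dw Lw : ℝ → E) (G : ℝ → ℝ)
    (hderiv : ∀ τ, HasDerivAt w (dw τ) τ)
    (hmean : (∫ τ in (0:ℝ)..(2 * Real.pi), w τ) = 0)
    (hdwcont : Continuous dw) (hLwcont : Continuous Lw)
    (hG : ∀ τ, G τ = -⟪Lw τ, w τ⟫)
    (hGdiff : ∀ s τ : ℝ, 0 ≤ s → s ≤ τ → τ ≤ 2 * Real.pi →
      G τ - G s = ∫ ξ in s..τ, ⟪dw ξ, Lw ξ⟫) :
    ∀ τ ∈ Set.Icc (0:ℝ) (2 * Real.pi),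
      G τ ≤ (1 / ω) * ∫ ξ in (0:ℝ)..(2 * Real.pi),
        (ω ^ 2 * ‖dw ξ‖ ^ 2 + ‖Lw ξ‖ ^ 2) := by
  intro τ hτ
  set J := ∫ ξ in (0:ℝ)..(2 * Real.pi), (ω ^ 2 * ‖dw ξ‖ ^ 2 + ‖Lw ξ‖ ^ 2)
  have hπ : (0:ℝ) < 2 * Real.pi := by positivity
  have hGeq : G = fun τ => -⟪Lw τ, w τ⟫ := funext hG
  have hGcont : Continuous G :=
    hGeq ▸ (hLwcont.inner (continuous_iff_continuousAt.2 fun x => (hderiv x).continuousAt)).neg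
  have hGsub : ∀ s ∈ Icc 0 (2 * Real.pi), G τ - G s = ∫ ξ in s..τ, ⟪dw ξ, Lw ξ⟫ := by
    intro s hs
    rcases le_total s τ with hsτ | hτs
    · exact hGdiff s τ hs.1 hsτ hτ.2
    · rw [integral_symm, ← hGdiff τ s hτ.1 hτs hs.2, neg_sub]
  have hosc : ∀ s ∈ Icc 0 (2 * Real.pi), G τ - G s ≤ J / (2 * ω) := fun s hs =>
    calc G τ - G s ≤ ‖∫ ξ in s..τ, ⟪dw ξ, Lw ξ⟫‖ := hGsub s hs ▸ le_abs_self _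
      _ ≤ ∫ ξ in (0:ℝ)..(2 * Real.pi), |⟪dw ξ, Lw ξ⟫| :=
        norm_intervalIntegral_le_of_mem_Icc ((hdwcont.inner hLwcont).intervalIntegrable _ _) hs hτ
      _ ≤ J / (2 * ω) := integral_abs_inner_le hdwcont hLwcont hπ.le hω
  have hint : ∫ s in (0:ℝ)..(2 * Real.pi), G s ≤ (2 * Real.pi - 0) * (J / (2 * ω)) := by
    rw [hGeq, ← mul_div_assoc]
    exact integral_neg_inner_le_of_integral_eq_zero hderiv hdwcont hLwcont hπ hmean hω
  calc G τ ≤ J / (2 * ω) + J / (2 * ω) :=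
        le_add_of_sub_le_of_integral_le hπ (hGcont.intervalIntegrable _ _) hosc hint
    _ = 1 / ω * J := by field_simp; ring

/-- Estimate (5.1)₂ of Lemma 5.1, abstract form. In the setting of the previous statement,
if in addition `G(τ) − G(s) = ∫ₛ^τ ⟨∂_ξ w(ξ), PΔw(ξ)⟩ dξ` for `0 ≤ s ≤ τ ≤ 2π`, then
`max_{τ∈[0,2π]} G(τ) ≤ J_ω/ω`, where `G(τ)` plays the role of `‖∇w(τ)‖₂²` and
`J_ω = ∫₀^{2π}(ω²‖∂_τ w‖₂² + ‖PΔw‖₂²)dτ`. -/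
theorem gradient_max_estimate
    {E : Type*} [NormedAddCommGroup E] [InnerProductSpace ℝ E] [CompleteSpace E]
    (ω : ℝ) (hω : 0 < ω)
    (w dw Lw : ℝ → E) (G : ℝ → ℝ)
    (hderiv : ∀ τ, HasDerivAt w (dw τ) τ)
    (hper : ∀ τ, w (τ + 2 * Real.pi) = w τ)
    (hmean : (∫ τ in (0:ℝ)..(2 * Real.pi), w τ) = 0)
    (hdwcont : Continuous dw) (hLwcont : Continuous Lw)
    (hG : ∀ τ, G τ = -⟪Lw τ, w τ⟫) (hGpos : ∀ τ, 0 ≤ G τ)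
    (hGdiff : ∀ s τ : ℝ, 0 ≤ s → s ≤ τ → τ ≤ 2 * Real.pi →
      G τ - G s = ∫ ξ in s..τ, ⟪dw ξ, Lw ξ⟫) :
    ∀ τ ∈ Set.Icc (0:ℝ) (2 * Real.pi),
      G τ ≤ (1 / ω) * ∫ ξ in (0:ℝ)..(2 * Real.pi),
        (ω ^ 2 * ‖dw ξ‖ ^ 2 + ‖Lw ξ‖ ^ 2) :=
  gradient_max_estimate_general ω hω w dw Lw G hderiv hmean hdwcont hLwcont hG hGdiff
end
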